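/- arXiv:2111.15165 — 7 statements merged into one kernel-verified Lean document; each statement's English description precedes it below -/
import Mathlib

section
/- Let G be an abelian group and φ : G → G a homomorphism. Let G∞ = lim→(G, φ) be the direct limit of the sequence G →φ G →φ G →⋯, with canonical maps φ_{n,∞} : G → G∞, and let φ∞ : G∞ → G∞ be the induced homomorphism satisfying φ∞ ∘ φ_{n,∞} = φ_{n,∞} ∘ φ. Then the map φ_{1,∞} restricts to an isomorphism of ker(1 − φ) onto ker(1 − φ∞). -/
/-!
On fixed points of `φ` every map `j n` agrees with every other, since `j n = j (n + 1) ∘ φ`.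
An element of `ker(1 - φ)` killed by `j 1` is killed by some iterate of `φ`, which fixes it,
so it is zero. Conversely, if `x = j n g` is fixed by `φ∞`, then `j n (φ g - g) = 0`, so some
iterate `φ^[k]` kills `φ g - g`; hence `φ^[k] g` is fixed by `φ` and represents `x`.
-/

theorem AddMonoidHom.mem_ker_id_sub_iff {A : Type*} [AddCommGroup A] (f : A →+ A) (x : A) :
    x ∈ (AddMonoidHom.id A - f).ker ↔ f x = x := by
  rw [mem_ker, sub_apply, id_apply, sub_eq_zero, eq_comm]

section ConstantDirectSystem

variable {G L : Type*} [AddCommGroup G] [AddCommGroup L] {φ : G →+ G} {j : ℕ → G →+ L}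

theorem apply_eq_apply_add_iterate (hcompat : ∀ n, j n = (j (n + 1)).comp φ) (n k : ℕ) (g : G) :
    j n g = j (n + k) ((⇑φ)^[k] g) := by
  induction k generalizing g with
  | zero => rfl
  | succ k ih =>
    rw [ih, Function.iterate_succ_apply', ← add_assoc, hcompat (n + k), AddMonoidHom.comp_apply]

theorem apply_eq_apply_of_fixed (hcompat : ∀ n, j n = (j (n + 1)).comp φ) {a : G}
    (ha : φ a = a) (m n : ℕ) : j m a = j n a := by
  have hsucc (n : ℕ) : j n a = j (n + 1) a := by rw [hcompat n, AddMonoidHom.comp_apply, ha]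
  have hzero (n : ℕ) : j n a = j 0 a := by
    induction n with
    | zero => rfl
    | succ n ih => rw [← hsucc, ih]
  rw [hzero m, hzero n]

theorem eq_zero_of_fixed_of_apply_eq_zero (hker : ∀ n g, j n g = 0 → ∃ k, (⇑φ)^[k] g = 0)
    {a : G} (ha : φ a = a) {n : ℕ} (h : j n a = 0) : a = 0 := by
  obtain ⟨k, hk⟩ := hker n a h
  rwa [Function.iterate_fixed ha] at hk

theorem exists_fixed_apply_eq (hcompat : ∀ n, j n = (j (n + 1)).comp φ)
    (hsurj : ∀ x : L, ∃ n g, j n g = x) (hker : ∀ n g, j n g = 0 → ∃ k, (⇑φ)^[k] g = 0)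
    {φinf : L →+ L} (hφinf : ∀ n, φinf.comp (j n) = (j n).comp φ) {x : L} (hx : φinf x = x)
    (m : ℕ) : ∃ h : G, φ h = h ∧ j m h = x := by
  obtain ⟨n, g, rfl⟩ := hsurj x
  have hdefect : j n (φ g - g) = 0 := by
    rw [map_sub, ← AddMonoidHom.comp_apply, ← hφinf, AddMonoidHom.comp_apply, hx, sub_self]
  obtain ⟨k, hk⟩ := hker n _ hdefect
  have hfixed : φ ((⇑φ)^[k] g) = (⇑φ)^[k] g := by
    rw [← Function.iterate_succ_apply' φ, Function.iterate_succ_apply,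
      ← sub_eq_zero, ← iterate_map_sub, hk]
  exact ⟨_, hfixed, by rw [apply_eq_apply_of_fixed hcompat hfixed m (n + k),
    ← apply_eq_apply_add_iterate hcompat]⟩

end ConstantDirectSystem

/-- the canonical map `φ_{1,∞}` of the direct limit of the constant
system `G →φ G →φ ⋯` restricts to an isomorphism of `ker(1 - φ)` onto `ker(1 - φ∞)`. -/
theorem stmt_0 {G L : Type*} [AddCommGroup G] [AddCommGroup L]
    (φ : G →+ G) (j : ℕ → G →+ L)
    (hcompat : ∀ n, j n = (j (n + 1)).comp φ)
    (hsurj : ∀ x : L, ∃ n g, j n g = x)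
    (hker : ∀ n g, j n g = 0 → ∃ k, (⇑φ)^[k] g = 0)
    (φinf : L →+ L)
    (hφinf : ∀ n, φinf.comp (j n) = (j n).comp φ) :
    ∃ e : AddMonoidHom.ker (AddMonoidHom.id G - φ) ≃+
        AddMonoidHom.ker (AddMonoidHom.id L - φinf),
      ∀ g : AddMonoidHom.ker (AddMonoidHom.id G - φ), (e g : L) = j 1 (g : G) := by
  have hmaps (g : (AddMonoidHom.id G - φ).ker) : j 1 g ∈ (AddMonoidHom.id L - φinf).ker := by
    rw [AddMonoidHom.mem_ker_id_sub_iff, ← AddMonoidHom.comp_apply, hφinf, AddMonoidHom.comp_apply,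
      (φ.mem_ker_id_sub_iff g).mp g.2]
  let F := ((j 1).comp (AddMonoidHom.id G - φ).ker.subtype).codRestrict _ hmaps
  have hinj : Function.Injective F := by
    refine (injective_iff_map_eq_zero F).mpr fun a ha => Subtype.ext ?_
    exact eq_zero_of_fixed_of_apply_eq_zero hker ((φ.mem_ker_id_sub_iff a).mp a.2)
      (congrArg Subtype.val ha)
  have hsurjF : Function.Surjective F := by
    rintro ⟨x, hx⟩
    obtain ⟨h, hfixed, rfl⟩ :=
      exists_fixed_apply_eq hcompat hsurj hker hφinf ((φinf.mem_ker_id_sub_iff x).mp hx) 1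
    exact ⟨⟨h, (φ.mem_ker_id_sub_iff h).mpr hfixed⟩, rfl⟩
  exact ⟨AddEquiv.ofBijective F ⟨hinj, hsurjF⟩, fun g => rfl⟩
end

section
/- Let G be an abelian group and φ : G → G a homomorphism. Let G∞ = lim→(G, φ) with canonical maps φ_{n,∞} and induced endomorphism φ∞. Then there is a well-defined isomorphism coker(1 − φ) → coker(1 − φ∞) sending g + im(1 − φ) to φ_{1,∞}(g) + im(1 − φ∞). -/
/-- there is a well-defined isomorphism
`coker(1 - φ) ≅ coker(1 - φ∞)` sending `g + im(1 - φ)` to `φ_{1,∞}(g) + im(1 - φ∞)`. -/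
theorem stmt_1 {G L : Type*} [AddCommGroup G] [AddCommGroup L]
    (φ : G →+ G) (j : ℕ → G →+ L)
    (hcompat : ∀ n, j n = (j (n + 1)).comp φ)
    (hsurj : ∀ x : L, ∃ n g, j n g = x)
    (hker : ∀ n g, j n g = 0 → ∃ k, (⇑φ)^[k] g = 0)
    (φinf : L →+ L)
    (hφinf : ∀ n, φinf.comp (j n) = (j n).comp φ) :
    ∃ e : G ⧸ (AddMonoidHom.id G - φ).range ≃+ L ⧸ (AddMonoidHom.id L - φinf).range,
      ∀ g : G,
        e (QuotientAddGroup.mk g) = QuotientAddGroup.mk (j 1 g) := by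
  -- basic facts
  have hco : ∀ n g, j n g = j (n + 1) (φ g) := by
    intro n g; rw [hcompat n]; rfl
  have hφj : ∀ n g, φinf (j n g) = j n (φ g) := by
    intro n g; exact DFunLike.congr_fun (hφinf n) g
  have hitsub : ∀ k (a b : G), (⇑φ)^[k] (a - b) = (⇑φ)^[k] a - (⇑φ)^[k] b := by
    intro k
    induction k with
    | zero => intro a b; simp
    | succ k ih =>
      intro a b
      simp [Function.iterate_succ_apply, map_sub, ih]
  have hiter : ∀ k n g, j n g = j (n + k) ((⇑φ)^[k] g) := by
    intro k
    induction k with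
    | zero => intro n g; simp
    | succ k ih =>
      intro n g
      rw [hco n g, ih (n + 1) (φ g), Function.iterate_succ_apply]
      ring_nf
  -- everything of the form a - φ^[m] a lies in the range of (1 - φ)
  have hrangesub : ∀ (m : ℕ) (a : G), a - (⇑φ)^[m] a ∈ (AddMonoidHom.id G - φ).range := by
    intro m
    induction m with
    | zero => intro a; exact ⟨0, by simp⟩
    | succ m ih =>
      intro a
      have h1 : a - (⇑φ)^[m + 1] a =
          (a - (⇑φ)^[m] a) + ((⇑φ)^[m] a - φ ((⇑φ)^[m] a)) := by
        rw [Function.iterate_succ_apply']; abel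
      rw [h1]
      exact AddSubgroup.add_mem _ (ih a) ⟨(⇑φ)^[m] a, by simp⟩
  set Q := L ⧸ (AddMonoidHom.id L - φinf).range with hQ
  set π : L →+ Q := QuotientAddGroup.mk' _ with hπdef
  have hπ : ∀ x : L, π (x - φinf x) = 0 := by
    intro x
    rw [hπdef, QuotientAddGroup.mk'_apply, QuotientAddGroup.eq_zero_iff]
    exact ⟨x, by simp⟩
  have hstep : ∀ n g, π (j (n + 1) g) = π (j n g) := by
    intro n g
    have h := hπ (j (n + 1) g)
    rw [hφj, ← hco, map_sub, sub_eq_zero] at h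
    exact h
  have hconst : ∀ n g, π (j n g) = π (j 0 g) := by
    intro n
    induction n with
    | zero => intro g; rfl
    | succ n ih => intro g; rw [hstep, ih]
  set f : G →+ Q := π.comp (j 1) with hfdef
  have hfsurj : Function.Surjective f := by
    intro q
    induction q using QuotientAddGroup.induction_on with
    | H x =>
      obtain ⟨n, g, rfl⟩ := hsurj x
      exact ⟨g, by rw [hfdef]; show π (j 1 g) = π (j n g); rw [hconst 1 g, hconst n g]⟩
  have hkereq : f.ker = (AddMonoidHom.id G - φ).range := by
    ext g
    constructor
    · intro hg
      have hg' : π (j 1 g) = 0 := hg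
      rw [hπdef, QuotientAddGroup.mk'_apply, QuotientAddGroup.eq_zero_iff] at hg'
      obtain ⟨x, hx⟩ := hg'
      obtain ⟨n, h, rfl⟩ := hsurj x
      have hx' : j n (h - φ h) = j 1 g := by
        simpa [map_sub, hφj] using hx
      -- move both to level n + 1
      have e1 : j 1 g = j (n + 1) ((⇑φ)^[n] g) := by
        rw [hiter n 1 g]; ring_nf
      have e2 : j n (h - φ h) = j (n + 1) (φ (h - φ h)) := hco n _
      have e3 : j (n + 1) ((⇑φ)^[n] g - φ (h - φ h)) = 0 := by
        rw [map_sub, ← e1, ← e2, hx', sub_self]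
      obtain ⟨k, hk⟩ := hker _ _ e3
      rw [hitsub, sub_eq_zero] at hk
      -- φ^[k+n] g = φ^[k] (φ (h - φ h)) = (1-φ) (φ^[k+1] h)
      have key : (⇑φ)^[k + n] g = (⇑φ)^[k + 1] h - φ ((⇑φ)^[k + 1] h) := by
        rw [Function.iterate_add_apply, hk, ← Function.iterate_succ_apply, hitsub,
          ← Function.iterate_succ_apply, Function.iterate_succ_apply']
        simp [Function.iterate_succ_apply']
      have : g = (g - (⇑φ)^[k + n] g) + ((⇑φ)^[k + 1] h - φ ((⇑φ)^[k + 1] h)) := by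
        rw [← key]; abel
      rw [this]
      exact AddSubgroup.add_mem _ (hrangesub _ g) ⟨(⇑φ)^[k + 1] h, by simp⟩
    · rintro ⟨x, rfl⟩
      show π (j 1 ((AddMonoidHom.id G - φ) x)) = 0
      have : j 1 ((AddMonoidHom.id G - φ) x) = j 1 x - φinf (j 1 x) := by
        simp [map_sub, hφj]
      rw [this]
      exact hπ _
  refine ⟨(QuotientAddGroup.quotientAddEquivOfEq hkereq.symm).trans
      (QuotientAddGroup.quotientKerEquivOfSurjective f hfsurj), fun g => ?_⟩
  rfl
end

section
/- Let Λ be a row-finite 2-graph with no sources with adjacency matrices A₁, A₂ (viewed as endomorphisms of ℤΛ⁰), and let H ⊆ Λ⁰ be a hereditary subset with restricted matrices A_{H,1}, A_{H,2} (endomorphisms of ℤH). If Λ satisfies the matrix condition {(1 − A₁^t)f + (1 − A₂^t)g : f, g ∈ ℤΛ⁰} ∩ ℕΛ⁰ = {0}, then HΛ satisfies the corresponding matrix condition: {(1 − A_{H,1}^t)f + (1 − A_{H,2}^t)g : f, g ∈ ℤH} ∩ ℕH = {0}. -/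
/-- A `2`-graph: a countable category (objects `V`, paths `P`, range `r`, source `s`,
composition `comp`, identities `vert`) with a degree functor `d : P → ℕ × ℕ` having the
unique factorisation property, which is row-finite and has no sources. -/
structure TwoGraph where
  V : Type
  P : Type
  countV : Countable V
  countP : Countable P
  r : P → V
  s : P → V
  d : P → ℕ × ℕ
  vert : V → P
  comp : ∀ μ ν : P, s μ = r ν → P
  r_vert : ∀ v, r (vert v) = v
  s_vert : ∀ v, s (vert v) = v
  d_vert : ∀ v, d (vert v) = 0
  r_comp : ∀ (μ ν : P) (h : s μ = r ν), r (comp μ ν h) = r μ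
  s_comp : ∀ (μ ν : P) (h : s μ = r ν), s (comp μ ν h) = s ν
  d_comp : ∀ (μ ν : P) (h : s μ = r ν), d (comp μ ν h) = d μ + d ν
  id_comp : ∀ μ : P, comp (vert (r μ)) μ (s_vert (r μ)) = μ
  comp_id : ∀ μ : P, comp μ (vert (s μ)) ((r_vert (s μ)).symm) = μ
  assoc : ∀ (μ ν ρ : P) (h₁ : s μ = r ν) (h₂ : s ν = r ρ),
    comp (comp μ ν h₁) ρ ((s_comp μ ν h₁).trans h₂) =
      comp μ (comp ν ρ h₂) (h₁.trans (r_comp ν ρ h₂).symm)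
  factor : ∀ (p : P) (m n : ℕ × ℕ), d p = m + n →
    ∃! q : P × P, ∃ h : s q.1 = r q.2, d q.1 = m ∧ d q.2 = n ∧ comp q.1 q.2 h = p
  rowFinite : ∀ (v : V) (n : ℕ × ℕ), {p : P | r p = v ∧ d p = n}.Finite
  noSources : ∀ (v : V) (n : ℕ × ℕ), {p : P | r p = v ∧ d p = n}.Nonempty

/-- The adjacency count of paths of degree `e` with range `v` and source `w`;
for `e = (1,0)` this is `A₁(v,w)` and for `e = (0,1)` it is `A₂(v,w)`. -/
noncomputable def TwoGraph.adj (Λ : TwoGraph) (e : ℕ × ℕ) (v w : Λ.V) : ℕ :=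
  Nat.card {p : Λ.P // Λ.r p = v ∧ Λ.s p = w ∧ Λ.d p = e}

/-- The transposed adjacency matrix of degree `e`, acting on integer-valued functions
on vertices: `(A_e^t f)(v) = ∑_w A_e(w,v) f(w)`. -/
noncomputable def TwoGraph.Tt (Λ : TwoGraph) (e : ℕ × ℕ) (f : Λ.V → ℤ) : Λ.V → ℤ :=
  fun v => ∑ᶠ w : Λ.V, (Λ.adj e w v : ℤ) * f w

open Classical in
/-- The transpose of the `S × S` corner of the adjacency matrix of degree `e`
(the adjacency matrix of the subgraph on the vertex set `S`), acting on
integer-valued functions and extended by zero off `S`. -/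
noncomputable def TwoGraph.TtOn (Λ : TwoGraph) (S : Set Λ.V) (e : ℕ × ℕ) (f : Λ.V → ℤ) :
    Λ.V → ℤ :=
  fun v => if v ∈ S then ∑ᶠ w ∈ S, (Λ.adj e w v : ℤ) * f w else 0

/-- The matrix condition (M) for a `2`-graph `Λ`:
`{(1 - A₁^t)f + (1 - A₂^t)g : f, g ∈ ℤΛ⁰} ∩ ℕΛ⁰ = {0}`. -/
def MatrixCondition (Λ : TwoGraph) : Prop :=
  ∀ f : Λ.V → ℤ, (Function.support f).Finite → (∀ v, 0 ≤ f v) →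
    (∃ g h : Λ.V → ℤ, (Function.support g).Finite ∧ (Function.support h).Finite ∧
      ∀ v, f v = (g v - Λ.Tt (1, 0) g v) + (h v - Λ.Tt (0, 1) h v)) →
    f = 0

/-- The matrix condition for the subgraph on the vertex set `S`:
`{(1 - A_{S,1}^t)f + (1 - A_{S,2}^t)g : f, g ∈ ℤS} ∩ ℕS = {0}`. -/
def MatrixConditionOn (Λ : TwoGraph) (S : Set Λ.V) : Prop :=
  ∀ f : Λ.V → ℤ, (Function.support f).Finite → Function.support f ⊆ S → (∀ v, 0 ≤ f v) →
    (∃ g h : Λ.V → ℤ, (Function.support g).Finite ∧ Function.support g ⊆ S ∧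
      (Function.support h).Finite ∧ Function.support h ⊆ S ∧
      ∀ v, f v = (g v - Λ.TtOn S (1, 0) g v) + (h v - Λ.TtOn S (0, 1) h v)) →
    f = 0

/-- if a row-finite `2`-graph `Λ` with no sources satisfies the matrix
condition (M), then so does the hereditary subgraph `HΛ`. -/
theorem stmt_11 (Λ : TwoGraph) (H : Set Λ.V)
    (hH : ∀ p : Λ.P, Λ.r p ∈ H → Λ.s p ∈ H)
    (hM : MatrixCondition Λ) :
    MatrixConditionOn Λ H := by
  have key : ∀ (e : ℕ × ℕ) (g : Λ.V → ℤ), Function.support g ⊆ H →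
      ∀ v, Λ.TtOn H e g v = Λ.Tt e g v := by
    intro e g hg v
    unfold TwoGraph.TtOn TwoGraph.Tt
    by_cases hv : v ∈ H
    · simp only [hv, if_true, finsum_mem_def]
      congr 1
      funext w
      classical
      rw [Set.indicator_apply]
      by_cases hw : w ∈ H
      · simp [hw]
      · simp only [hw, if_false]
        have : g w = 0 := by
          by_contra h
          exact hw (hg h)
        simp [this]
    · simp only [hv, if_false]
      symm
      apply finsum_eq_zero_of_forall_eq_zero
      intro w
      by_cases hw : w ∈ H
      · have : Λ.adj e w v = 0 := by
          unfold TwoGraph.adj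
          have : IsEmpty {p : Λ.P // Λ.r p = w ∧ Λ.s p = v ∧ Λ.d p = e} := by
            constructor
            rintro ⟨p, hr, hs, _⟩
            exact hv (hs ▸ hH p (hr ▸ hw))
          exact Nat.card_of_isEmpty
        simp [this]
      · have : g w = 0 := by
          by_contra h
          exact hw (hg h)
        simp [this]
  intro f hf hfH hfpos ⟨g, h, hgfin, hgH, hhfin, hhH, heq⟩
  apply hM f hf hfpos
  refine ⟨g, h, hgfin, hhfin, fun v => ?_⟩
  rw [heq v, key (1,0) g hgH v, key (0,1) h hhH v]
end

section
/- Let Λ⁰ be a countable set partitioned as Λ⁰ = (Λ⁰ \ H) ⊔ H where H is hereditary for a row-finite 2-graph Λ with no sources (so each adjacency matrix has block-upper-triangular form A_i = [[B_i, *],[0, A_{H,i}]] with respect to this partition). Suppose: (a) the quotient graph satisfies the matrix condition, i.e. {(1 − B₁^t)f + (1 − B₂^t)g : f, g ∈ ℤ(Λ⁰ \ H)} ∩ ℕ(Λ⁰ \ H) = {0}; (b) HΛ satisfies the matrix condition; and (c) ker(ι̃) ∩ [ℕH + im(1 − A_{H,1}^t, 1 − A_{H,2}^t)]/im(1 − A_{H,1}^t,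 1 − A_{H,2}^t) = {0}, where ι̃ is the induced map on cokernels. Then Λ satisfies the matrix condition: {(1 − A₁^t)f + (1 − A₂^t)g : f, g ∈ ℤΛ⁰} ∩ ℕΛ⁰ = {0}. -/
/-! Since `H` is hereditary, the adjacency matrices are block triangular, so a relation
`f = (1 - A₁ᵗ) g + (1 - A₂ᵗ) h` restricts on `Λ⁰ \ H` to the same relation for the quotient
graph, and (a) forces `f` to be supported on `H`. Splitting `g` and `h` along `H`, the part
`m = (1 - A₁ᵗ) g|_{Λ⁰ \ H} + (1 - A₂ᵗ) h|_{Λ⁰ \ H}` equals `f` minus a relation inside `HΛ`, so it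
lies in `ℤH`, in `ℕH + im_H` and in the image for `Λ`. By (c) it lies in `im_H`, hence so
does `f`, and (b) gives `f = 0`. -/

namespace TwoGraph

open Function Set

variable {Λ : TwoGraph}

def IsHereditary (Λ : TwoGraph) (H : Set Λ.V) : Prop :=
  ∀ p : Λ.P, Λ.r p ∈ H → Λ.s p ∈ H

noncomputable def boundary (Λ : TwoGraph) (g h : Λ.V → ℤ) : Λ.V → ℤ :=
  g - Λ.Tt (1, 0) g + (h - Λ.Tt (0, 1) h)

noncomputable def boundaryOn (Λ : TwoGraph) (S : Set Λ.V) (g h : Λ.V → ℤ) : Λ.V → ℤ :=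
  g - Λ.TtOn S (1, 0) g + (h - Λ.TtOn S (0, 1) h)

def IsBoundaryOn (Λ : TwoGraph) (S : Set Λ.V) (m : Λ.V → ℤ) : Prop :=
  ∃ g h : Λ.V → ℤ, (support g).Finite ∧ support g ⊆ S ∧ (support h).Finite ∧ support h ⊆ S ∧
    ∀ v, m v = Λ.boundaryOn S g h v

lemma _root_.Set.Finite.indicator {α M : Type*} [Zero M] {a : α → M} (ha : (support a).Finite)
    (S : Set α) : (support (S.indicator a)).Finite :=
  ha.subset (support_indicator.subset.trans inter_subset_right)

lemma TtOn_eq_indicator (S : Set Λ.V) (e : ℕ × ℕ) (g : Λ.V → ℤ) :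
    Λ.TtOn S e g = S.indicator (Λ.Tt e (S.indicator g)) := by
  ext v
  by_cases hv : v ∈ S
  · simp only [TtOn, Tt, if_pos hv, indicator_of_mem hv, finsum_mem_def]
    exact finsum_congr fun w => by by_cases hw : w ∈ S <;> simp [hw]
  · simp [TtOn, hv]

lemma Tt_add (e : ℕ × ℕ) {a b : Λ.V → ℤ} (ha : (support a).Finite) (hb : (support b).Finite) :
    Λ.Tt e (a + b) = Λ.Tt e a + Λ.Tt e b := by
  ext v
  have hfin {c : Λ.V → ℤ} (hc : (support c).Finite) :
      (support fun w => (Λ.adj e w v : ℤ) * c w).Finite :=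
    hc.subset (support_mul_subset_right _ _)
  simp only [Tt, Pi.add_apply, mul_add]
  exact finsum_add_distrib (hfin ha) (hfin hb)

lemma Tt_neg (e : ℕ × ℕ) (a : Λ.V → ℤ) : Λ.Tt e (-a) = -Λ.Tt e a := by
  ext v
  simp only [Tt, Pi.neg_apply, mul_neg, finsum_neg_distrib]

lemma support_Tt_finite (e : ℕ × ℕ) {a : Λ.V → ℤ} (ha : (support a).Finite) :
    (support (Λ.Tt e a)).Finite := by
  refine (ha.biUnion fun w _ => (Λ.rowFinite w e).image Λ.s).subset fun v hv => ?_
  obtain ⟨w, hw⟩ : ∃ w, (Λ.adj e w v : ℤ) * a w ≠ 0 := by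
    by_contra! h
    exact hv (finsum_eq_zero_of_forall_eq_zero h)
  obtain ⟨hadj, haw⟩ := mul_ne_zero_iff.mp hw
  obtain ⟨⟨p, hr, hs, hd⟩⟩ : Nonempty {p : Λ.P // Λ.r p = w ∧ Λ.s p = v ∧ Λ.d p = e} := by
    by_contra h
    simp [adj, not_nonempty_iff.mp h] at hadj
  exact mem_biUnion haw ⟨p, ⟨hr, hd⟩, hs⟩

lemma support_boundary_finite {g h : Λ.V → ℤ} (hg : (support g).Finite)
    (hh : (support h).Finite) : (support (Λ.boundary g h)).Finite :=
  (((hg.union (support_Tt_finite _ hg)).subset (support_sub _ _)).union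
    ((hh.union (support_Tt_finite _ hh)).subset (support_sub _ _))).subset (support_add _ _)

lemma boundary_add {g h g' h' : Λ.V → ℤ} (hg : (support g).Finite) (hh : (support h).Finite)
    (hg' : (support g').Finite) (hh' : (support h').Finite) :
    Λ.boundary (g + g') (h + h') = Λ.boundary g h + Λ.boundary g' h' := by
  simp only [boundary, Tt_add _ hg hg', Tt_add _ hh hh']
  abel

lemma boundaryOn_add (S : Set Λ.V) {g h g' h' : Λ.V → ℤ} (hg : (support g).Finite)
    (hh : (support h).Finite) (hg' : (support g').Finite) (hh' : (support h').Finite) :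
    Λ.boundaryOn S (g + g') (h + h') = Λ.boundaryOn S g h + Λ.boundaryOn S g' h' := by
  simp only [boundaryOn, TtOn_eq_indicator, indicator_add',
    Tt_add _ (hg.indicator S) (hg'.indicator S), Tt_add _ (hh.indicator S) (hh'.indicator S)]
  abel

lemma boundaryOn_neg (S : Set Λ.V) (g h : Λ.V → ℤ) :
    Λ.boundaryOn S (-g) (-h) = -Λ.boundaryOn S g h := by
  simp only [boundaryOn, TtOn_eq_indicator, indicator_neg', Tt_neg]
  abel

lemma support_boundaryOn_subset {S : Set Λ.V} {g h : Λ.V → ℤ} (hg : support g ⊆ S)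
    (hh : support h ⊆ S) : support (Λ.boundaryOn S g h) ⊆ S := by
  intro v hv
  by_contra hvS
  simp [boundaryOn, TtOn, hvS, notMem_support.mp (hvS ∘ @hg v),
    notMem_support.mp (hvS ∘ @hh v)] at hv

lemma IsBoundaryOn.add {S : Set Λ.V} {m m' : Λ.V → ℤ} (hm : Λ.IsBoundaryOn S m)
    (hm' : Λ.IsBoundaryOn S m') : Λ.IsBoundaryOn S (m + m') := by
  obtain ⟨g, h, hg, hgS, hh, hhS, hm⟩ := hm
  obtain ⟨g', h', hg', hg'S, hh', hh'S, hm'⟩ := hm'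
  refine ⟨g + g', h + h', (hg.union hg').subset (support_add _ _),
    (support_add _ _).trans (union_subset hgS hg'S), (hh.union hh').subset (support_add _ _),
    (support_add _ _).trans (union_subset hhS hh'S), fun v => ?_⟩
  rw [boundaryOn_add S hg hh hg' hh', Pi.add_apply, Pi.add_apply, hm, hm']

section Hereditary

variable {H : Set Λ.V}

lemma adj_eq_zero_of_isHereditary (hH : Λ.IsHereditary H) (e : ℕ × ℕ) {w v : Λ.V}
    (hw : w ∈ H) (hv : v ∉ H) : Λ.adj e w v = 0 := by
  have : IsEmpty {p : Λ.P // Λ.r p = w ∧ Λ.s p = v ∧ Λ.d p = e} :=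
    ⟨fun ⟨p, hr, hs, _⟩ => hv (hs ▸ hH p (hr ▸ hw))⟩
  simp [adj]

lemma Tt_indicator_compl_apply (hH : Λ.IsHereditary H) (e : ℕ × ℕ) (g : Λ.V → ℤ) {v : Λ.V}
    (hv : v ∉ H) : Λ.Tt e (Hᶜ.indicator g) v = Λ.Tt e g v := by
  refine finsum_congr fun w => ?_
  by_cases hw : w ∈ H
  · simp [adj_eq_zero_of_isHereditary hH e hw hv]
  · simp [hw]

lemma TtOn_eq_Tt (hH : Λ.IsHereditary H) (e : ℕ × ℕ) {g : Λ.V → ℤ} (hg : support g ⊆ H) :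
    Λ.TtOn H e g = Λ.Tt e g := by
  have hout : Hᶜ.indicator g = 0 := indicator_eq_zero'.mpr (disjoint_compl_right.mono_left hg)
  rw [TtOn_eq_indicator, indicator_eq_self.mpr hg, indicator_eq_self]
  intro v hv
  by_contra hvH
  exact hv (by rw [← Tt_indicator_compl_apply hH e g hvH, hout]; simp [Tt])

lemma indicator_compl_boundary (hH : Λ.IsHereditary H) (g h : Λ.V → ℤ) :
    Hᶜ.indicator (Λ.boundary g h) = Λ.boundaryOn Hᶜ (Hᶜ.indicator g) (Hᶜ.indicator h) := by
  ext v
  by_cases hv : v ∈ H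
  · simp [boundaryOn, TtOn, hv]
  · simp [boundary, boundaryOn, TtOn_eq_indicator, hv, Tt_indicator_compl_apply hH _ _ hv]

lemma boundary_eq_boundaryOn_add (hH : Λ.IsHereditary H) {g h : Λ.V → ℤ}
    (hg : (support g).Finite) (hh : (support h).Finite) :
    Λ.boundary g h = Λ.boundaryOn H (H.indicator g) (H.indicator h) +
      Λ.boundary (Hᶜ.indicator g) (Hᶜ.indicator h) := by
  have hHpart : Λ.boundaryOn H (H.indicator g) (H.indicator h) =
      Λ.boundary (H.indicator g) (H.indicator h) := by
    simp only [boundaryOn, boundary, TtOn_eq_Tt hH _ support_indicator_subset]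
  rw [hHpart, ← boundary_add (hg.indicator H) (hh.indicator H) (hg.indicator Hᶜ)
    (hh.indicator Hᶜ), indicator_self_add_compl, indicator_self_add_compl]

lemma support_subset_of_matrixConditionOn_compl (hH : Λ.IsHereditary H)
    (ha : MatrixConditionOn Λ Hᶜ) {f g h : Λ.V → ℤ} (hf : (support f).Finite)
    (hf0 : ∀ v, 0 ≤ f v) (hg : (support g).Finite) (hh : (support h).Finite)
    (hfgh : f = Λ.boundary g h) : support f ⊆ H := by
  have hout : Hᶜ.indicator f = 0 := by
    refine ha _ (hf.indicator _) support_indicator_subset (fun v => ?_)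
      ⟨_, _, hg.indicator Hᶜ, support_indicator_subset, hh.indicator Hᶜ,
        support_indicator_subset, fun v => ?_⟩
    · by_cases hv : v ∈ Hᶜ <;> simp [hv, hf0 v]
    · rw [hfgh, indicator_compl_boundary hH]
      rfl
  exact disjoint_compl_right_iff_subset.mp (indicator_eq_zero'.mp hout)

end Hereditary

end TwoGraph

open Function Set TwoGraph in
theorem stmt_13_general (Λ : TwoGraph) (H : Set Λ.V)
    (hher : ∀ p : Λ.P, Λ.r p ∈ H → Λ.s p ∈ H)
    (ha : MatrixConditionOn Λ Hᶜ)
    (hb : MatrixConditionOn Λ H)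
    (hc : ∀ m : Λ.V → ℤ, (Function.support m).Finite → Function.support m ⊆ H →
      (∃ p g h : Λ.V → ℤ, (Function.support p).Finite ∧ Function.support p ⊆ H ∧
        (∀ v, 0 ≤ p v) ∧
        (Function.support g).Finite ∧ Function.support g ⊆ H ∧
        (Function.support h).Finite ∧ Function.support h ⊆ H ∧
        ∀ v, m v = p v + (g v - Λ.TtOn H (1, 0) g v) + (h v - Λ.TtOn H (0, 1) h v)) →
      (∃ g h : Λ.V → ℤ, (Function.support g).Finite ∧ (Function.support h).Finite ∧
        ∀ v, m v = (g v - Λ.Tt (1, 0) g v) + (h v - Λ.Tt (0, 1) h v)) →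
      ∃ g h : Λ.V → ℤ, (Function.support g).Finite ∧ Function.support g ⊆ H ∧
        (Function.support h).Finite ∧ Function.support h ⊆ H ∧
        ∀ v, m v = (g v - Λ.TtOn H (1, 0) g v) + (h v - Λ.TtOn H (0, 1) h v)) :
    MatrixCondition Λ := by
  rintro f hf hf0 ⟨g, h, hg, hh, hfgh⟩
  replace hfgh : f = Λ.boundary g h := funext hfgh
  have hfH := support_subset_of_matrixConditionOn_compl hher ha hf hf0 hg hh hfgh
  set g₀ := H.indicator g
  set h₀ := H.indicator h
  set m := Λ.boundary (Hᶜ.indicator g) (Hᶜ.indicator h)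
  have hg₀ : (support (-g₀)).Finite := (support_neg g₀).symm ▸ hg.indicator H
  have hh₀ : (support (-h₀)).Finite := (support_neg h₀).symm ▸ hh.indicator H
  have hg₀H : support (-g₀) ⊆ H := (support_neg g₀).trans_subset support_indicator_subset
  have hh₀H : support (-h₀) ⊆ H := (support_neg h₀).trans_subset support_indicator_subset
  have hsplit := boundary_eq_boundaryOn_add hher hg hh
  have hm : m = f + Λ.boundaryOn H (-g₀) (-h₀) := by
    rw [boundaryOn_neg, hfgh, hsplit]
    abel
  have hm_supp : support m ⊆ H :=
    hm ▸ (support_add _ _).trans (union_subset hfH (support_boundaryOn_subset hg₀H hh₀H))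
  have hm_bdry : Λ.IsBoundaryOn H m := hc m (support_boundary_finite (hg.indicator _)
    (hh.indicator _)) hm_supp ⟨f, -g₀, -h₀, hf, hfH, hf0, hg₀, hg₀H, hh₀, hh₀H,
      fun v => (congrFun hm v).trans (add_assoc _ _ _).symm⟩
    ⟨_, _, hg.indicator _, hh.indicator _, fun v => rfl⟩
  have hH_bdry : Λ.IsBoundaryOn H (Λ.boundaryOn H g₀ h₀) :=
    ⟨g₀, h₀, hg.indicator H, support_indicator_subset, hh.indicator H,
      support_indicator_subset, fun v => rfl⟩
  refine hb f hf hfH hf0 ?_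
  show Λ.IsBoundaryOn H f
  rw [hfgh, hsplit]
  exact hH_bdry.add hm_bdry

/-- suppose `H` is a saturated hereditary subset of `Λ⁰` such that
(a) the quotient graph `Λ \ ΛH` (the subgraph on `Λ⁰ \ H`) satisfies the matrix
condition, (b) `HΛ` satisfies the matrix condition, and (c) every `m ∈ ℤH` lying in
`ℕH + im(1 - A_{H,1}^t, 1 - A_{H,2}^t)` and in `im(1 - A₁^t) + im(1 - A₂^t)` (inside
`ℤΛ⁰`) already lies in `im(1 - A_{H,1}^t) + im(1 - A_{H,2}^t)`. Then `Λ` satisfies the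
matrix condition. -/
theorem stmt_13 (Λ : TwoGraph) (H : Set Λ.V)
    (hher : ∀ p : Λ.P, Λ.r p ∈ H → Λ.s p ∈ H)
    (hsat : ∀ v : Λ.V, (∃ n : ℕ × ℕ, ∀ p : Λ.P, Λ.r p = v → Λ.d p = n → Λ.s p ∈ H) → v ∈ H)
    (ha : MatrixConditionOn Λ Hᶜ)
    (hb : MatrixConditionOn Λ H)
    (hc : ∀ m : Λ.V → ℤ, (Function.support m).Finite → Function.support m ⊆ H →
      (∃ p g h : Λ.V → ℤ, (Function.support p).Finite ∧ Function.support p ⊆ H ∧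
        (∀ v, 0 ≤ p v) ∧
        (Function.support g).Finite ∧ Function.support g ⊆ H ∧
        (Function.support h).Finite ∧ Function.support h ⊆ H ∧
        ∀ v, m v = p v + (g v - Λ.TtOn H (1, 0) g v) + (h v - Λ.TtOn H (0, 1) h v)) →
      (∃ g h : Λ.V → ℤ, (Function.support g).Finite ∧ (Function.support h).Finite ∧
        ∀ v, m v = (g v - Λ.Tt (1, 0) g v) + (h v - Λ.Tt (0, 1) h v)) →
      ∃ g h : Λ.V → ℤ, (Function.support g).Finite ∧ Function.support g ⊆ H ∧
        (Function.support h).Finite ∧ Function.support h ⊆ H ∧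
        ∀ v, m v = (g v - Λ.TtOn H (1, 0) g v) + (h v - Λ.TtOn H (0, 1) h v)) :
    MatrixCondition Λ :=
  stmt_13_general Λ H hher ha hb hc
end

section
/- Let Λ be the 2-graph with vertex set {v_{m,n} : m, n ∈ ℤ} whose adjacency matrices are given by: A₁(v_{m,n-1}, v_{m,n}) = 1 for m ≤ 0, A₁(v_{m-1,n}, v_{m,n}) = 1 for m ≥ 1, all other entries of A₁ zero; and A₂(v_{m,n-1}, v_{m,n}) = 1 for m ≥ 0, A₂(v_{m+1,n}, v_{m,n}) = 1 for m ≤ −1, all other entries of A₂ zero (the graph of Subsection 6.2). Then {(1 − A₁^t)g + (1 − A₂^t)h : g, h ∈ ℤΛ⁰} ∩ ℕΛ⁰ = {0}. -/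
/-- The blue adjacency matrix of the `2`-graph of Subsection 6.2:
`A₁(v_{m,n-1}, v_{m,n}) = 1` for `m ≤ 0`, `A₁(v_{m-1,n}, v_{m,n}) = 1` for `m ≥ 1`,
and all other entries zero. -/
def A1 : ℤ × ℤ → ℤ × ℤ → ℕ := fun p q =>
  if (p.1 ≤ 0 ∧ q = (p.1, p.2 + 1)) ∨ (0 ≤ p.1 ∧ q = (p.1 + 1, p.2)) then 1 else 0

/-- The red adjacency matrix of the `2`-graph of Subsection 6.2:
`A₂(v_{m,n-1}, v_{m,n}) = 1` for `m ≥ 0`, `A₂(v_{m+1,n}, v_{m,n}) = 1` for `m ≤ -1`,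
and all other entries zero. -/
def A2 : ℤ × ℤ → ℤ × ℤ → ℕ := fun p q =>
  if (0 ≤ p.1 ∧ q = (p.1, p.2 + 1)) ∨ (p.1 ≤ 0 ∧ q = (p.1 - 1, p.2)) then 1 else 0

open Function Set

/-- The blue predecessor map. -/
def s1 : ℤ × ℤ → ℤ × ℤ := fun v => if v.1 ≤ 0 then (v.1, v.2 - 1) else (v.1 - 1, v.2)

/-- The red predecessor map. -/
def s2 : ℤ × ℤ → ℤ × ℤ := fun v => if 0 ≤ v.1 then (v.1, v.2 - 1) else (v.1 + 1, v.2)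

lemma A1_eq (w v : ℤ × ℤ) : A1 w v = if w = s1 v then 1 else 0 := by
  rcases w with ⟨a, b⟩; rcases v with ⟨m, n⟩
  by_cases hm : m ≤ 0 <;>
    simp only [A1, s1, hm, if_true, if_false, Prod.mk.injEq] <;>
    split_ifs <;> omega

lemma A2_eq (w v : ℤ × ℤ) : A2 w v = if w = s2 v then 1 else 0 := by
  rcases w with ⟨a, b⟩; rcases v with ⟨m, n⟩
  by_cases hm : (0:ℤ) ≤ m <;>
    simp only [A2, s2, hm, if_true, if_false, Prod.mk.injEq] <;>
    split_ifs <;> omega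

lemma finsum_A1 (g : ℤ × ℤ → ℤ) (v : ℤ × ℤ) :
    ∑ᶠ w : ℤ × ℤ, (A1 w v : ℤ) * g w = g (s1 v) := by
  rw [finsum_eq_single _ (s1 v)]
  · simp [A1_eq]
  · intro w hw; simp [A1_eq, hw]

lemma finsum_A2 (h : ℤ × ℤ → ℤ) (v : ℤ × ℤ) :
    ∑ᶠ w : ℤ × ℤ, (A2 w v : ℤ) * h w = h (s2 v) := by
  rw [finsum_eq_single _ (s2 v)]
  · simp [A2_eq]
  · intro w hw; simp [A2_eq, hw]

lemma supp_s1 {g : ℤ × ℤ → ℤ} (hg : (support g).Finite) :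
    (support fun v => g (s1 v)).Finite := by
  apply Set.Finite.subset
    ((hg.image (fun w : ℤ × ℤ => (w.1, w.2 + 1))).union
      (hg.image (fun w : ℤ × ℤ => (w.1 + 1, w.2))))
  intro v hv
  rw [mem_support] at hv
  by_cases hm : v.1 ≤ 0
  · left
    refine ⟨s1 v, by rwa [mem_support], ?_⟩
    simp [s1, hm, Prod.ext_iff]
  · right
    refine ⟨s1 v, by rwa [mem_support], ?_⟩
    simp [s1, hm, Prod.ext_iff]

lemma supp_s2 {h : ℤ × ℤ → ℤ} (hh : (support h).Finite) :
    (support fun v => h (s2 v)).Finite := by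
  apply Set.Finite.subset
    ((hh.image (fun w : ℤ × ℤ => (w.1, w.2 + 1))).union
      (hh.image (fun w : ℤ × ℤ => (w.1 - 1, w.2))))
  intro v hv
  rw [mem_support] at hv
  by_cases hm : (0:ℤ) ≤ v.1
  · left
    refine ⟨s2 v, by rwa [mem_support], ?_⟩
    simp [s2, hm, Prod.ext_iff]
  · right
    refine ⟨s2 v, by rwa [mem_support], ?_⟩
    simp [s2, hm, Prod.ext_iff]

lemma finsum_nonneg_zero {α : Type*} (w : α → ℤ) (hw : (support w).Finite)
    (hnn : ∀ a, 0 ≤ w a) (hs : ∑ᶠ a, w a = 0) (a : α) : w a = 0 := by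
  rw [finsum_eq_sum w hw] at hs
  by_cases ha : a ∈ hw.toFinset
  · exact (Finset.sum_eq_zero_iff_of_nonneg (fun i _ => hnn i)).mp hs a ha
  · simpa [Set.Finite.mem_toFinset, mem_support, not_not] using ha

lemma col0_eq (k : ℤ × ℤ → ℤ) :
    ∑ᶠ v ∈ {v : ℤ × ℤ | v.1 = 0}, k v = ∑ᶠ n, k (0, n) := by
  have hr : {v : ℤ × ℤ | v.1 = 0} = Set.range (fun n : ℤ => ((0 : ℤ), n)) := by
    ext v
    simp only [mem_setOf_eq, Set.mem_range, Prod.ext_iff]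
    constructor
    · intro hv; exact ⟨v.2, hv.symm, rfl⟩
    · rintro ⟨n, h1, _⟩; omega
  rw [hr, finsum_mem_range]
  intro a b hab
  simpa [Prod.ext_iff] using hab

/-- Splitting a global sum into the two half-planes counts column 0 twice. -/
lemma split_half (k : ℤ × ℤ → ℤ) (hk : (support k).Finite) :
    (∑ᶠ v ∈ {v : ℤ × ℤ | v.1 ≤ 0}, k v) + (∑ᶠ v ∈ {v : ℤ × ℤ | 0 ≤ v.1}, k v)
      = (∑ᶠ v, k v) + ∑ᶠ n, k (0, n) := by
  have hZQ : Disjoint {v : ℤ × ℤ | v.1 = 0} {v : ℤ × ℤ | 1 ≤ v.1} := by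
    rw [Set.disjoint_left]; intro v hv hv'
    simp only [mem_setOf_eq] at hv hv'; omega
  have hZQu : {v : ℤ × ℤ | v.1 = 0} ∪ {v : ℤ × ℤ | 1 ≤ v.1} = {v : ℤ × ℤ | 0 ≤ v.1} := by
    ext v; simp only [Set.mem_union, mem_setOf_eq]; omega
  have hPQ : Disjoint {v : ℤ × ℤ | v.1 ≤ 0} {v : ℤ × ℤ | 1 ≤ v.1} := by
    rw [Set.disjoint_left]; intro v hv hv'
    simp only [mem_setOf_eq] at hv hv'; omega
  have hPQu : {v : ℤ × ℤ | v.1 ≤ 0} ∪ {v : ℤ × ℤ | 1 ≤ v.1} = Set.univ := by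
    ext v; simp only [Set.mem_union, mem_setOf_eq, Set.mem_univ, iff_true]; omega
  have e1 : ∑ᶠ v ∈ {v : ℤ × ℤ | 0 ≤ v.1}, k v
      = (∑ᶠ v ∈ {v : ℤ × ℤ | v.1 = 0}, k v) + ∑ᶠ v ∈ {v : ℤ × ℤ | 1 ≤ v.1}, k v := by
    rw [← hZQu]
    exact finsum_mem_union' hZQ (hk.inter_of_right _) (hk.inter_of_right _)
  have e2 : (∑ᶠ v ∈ {v : ℤ × ℤ | v.1 ≤ 0}, k v) + ∑ᶠ v ∈ {v : ℤ × ℤ | 1 ≤ v.1}, k v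
      = ∑ᶠ v, k v := by
    rw [← finsum_mem_union' hPQ (hk.inter_of_right _) (hk.inter_of_right _), hPQu,
      finsum_mem_univ]
  rw [e1, ← e2, col0_eq]
  ring

lemma sum_shift1 (g : ℤ × ℤ → ℤ) (hg : (support g).Finite) :
    ∑ᶠ v : ℤ × ℤ, g (s1 v) = (∑ᶠ v, g v) + ∑ᶠ n, g (0, n) := by
  have hgs1 := supp_s1 hg
  have hPQ : Disjoint {v : ℤ × ℤ | v.1 ≤ 0} {v : ℤ × ℤ | 1 ≤ v.1} := by
    rw [Set.disjoint_left]; intro v hv hv'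
    simp only [mem_setOf_eq] at hv hv'; omega
  have hPQu : {v : ℤ × ℤ | v.1 ≤ 0} ∪ {v : ℤ × ℤ | 1 ≤ v.1} = Set.univ := by
    ext v; simp only [Set.mem_union, mem_setOf_eq, Set.mem_univ, iff_true]; omega
  have bijP : Set.BijOn (fun v : ℤ × ℤ => (v.1, v.2 - 1))
      {v : ℤ × ℤ | v.1 ≤ 0} {v : ℤ × ℤ | v.1 ≤ 0} := by
    refine ⟨fun x hx => hx, fun x _ y _ hxy => ?_, fun y hy => ⟨(y.1, y.2 + 1), hy, ?_⟩⟩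
    · simp only [Prod.mk.injEq] at hxy
      rw [Prod.ext_iff]; exact ⟨hxy.1, by omega⟩
    · rw [Prod.ext_iff]; exact ⟨rfl, by ring⟩
  have bijQ : Set.BijOn (fun v : ℤ × ℤ => (v.1 - 1, v.2))
      {v : ℤ × ℤ | 1 ≤ v.1} {v : ℤ × ℤ | 0 ≤ v.1} := by
    refine ⟨fun x hx => ?_, fun x _ y _ hxy => ?_, fun y hy => ⟨(y.1 + 1, y.2), ?_, ?_⟩⟩
    · have hx' : (1:ℤ) ≤ x.1 := hx
      show (0:ℤ) ≤ x.1 - 1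
      omega
    · simp only [Prod.mk.injEq] at hxy
      rw [Prod.ext_iff]; exact ⟨by omega, hxy.2⟩
    · have hy' : (0:ℤ) ≤ y.1 := hy
      show (1:ℤ) ≤ y.1 + 1
      omega
    · rw [Prod.ext_iff]; exact ⟨by ring, rfl⟩
  calc ∑ᶠ v : ℤ × ℤ, g (s1 v) = ∑ᶠ v ∈ {v : ℤ × ℤ | v.1 ≤ 0} ∪ {v : ℤ × ℤ | 1 ≤ v.1}, g (s1 v) := by
        rw [hPQu, finsum_mem_univ]
    _ = (∑ᶠ v ∈ {v : ℤ × ℤ | v.1 ≤ 0}, g (s1 v))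
        + ∑ᶠ v ∈ {v : ℤ × ℤ | 1 ≤ v.1}, g (s1 v) :=
        finsum_mem_union' hPQ (hgs1.inter_of_right _) (hgs1.inter_of_right _)
    _ = (∑ᶠ v ∈ {v : ℤ × ℤ | v.1 ≤ 0}, g v) + ∑ᶠ v ∈ {v : ℤ × ℤ | 0 ≤ v.1}, g v := by
        congr 1
        · exact finsum_mem_eq_of_bijOn _ bijP (fun x hx => by
            have hx' : x.1 ≤ 0 := hx
            simp [s1, hx'])
        · exact finsum_mem_eq_of_bijOn _ bijQ (fun x hx => by
            have hx' : (1:ℤ) ≤ x.1 := hx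
            simp [s1, show ¬ x.1 ≤ 0 by omega])
    _ = (∑ᶠ v, g v) + ∑ᶠ n, g (0, n) := split_half g hg

lemma sum_shift2 (h : ℤ × ℤ → ℤ) (hh : (support h).Finite) :
    ∑ᶠ v : ℤ × ℤ, h (s2 v) = (∑ᶠ v, h v) + ∑ᶠ n, h (0, n) := by
  have hhs2 := supp_s2 hh
  have hPQ : Disjoint {v : ℤ × ℤ | 0 ≤ v.1} {v : ℤ × ℤ | v.1 ≤ -1} := by
    rw [Set.disjoint_left]; intro v hv hv'
    simp only [mem_setOf_eq] at hv hv'; omega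
  have hPQu : {v : ℤ × ℤ | 0 ≤ v.1} ∪ {v : ℤ × ℤ | v.1 ≤ -1} = Set.univ := by
    ext v; simp only [Set.mem_union, mem_setOf_eq, Set.mem_univ, iff_true]; omega
  have bijP : Set.BijOn (fun v : ℤ × ℤ => (v.1, v.2 - 1))
      {v : ℤ × ℤ | 0 ≤ v.1} {v : ℤ × ℤ | 0 ≤ v.1} := by
    refine ⟨fun x hx => hx, fun x _ y _ hxy => ?_, fun y hy => ⟨(y.1, y.2 + 1), hy, ?_⟩⟩
    · simp only [Prod.mk.injEq] at hxy
      rw [Prod.ext_iff]; exact ⟨hxy.1, by omega⟩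
    · rw [Prod.ext_iff]; exact ⟨rfl, by ring⟩
  have bijQ : Set.BijOn (fun v : ℤ × ℤ => (v.1 + 1, v.2))
      {v : ℤ × ℤ | v.1 ≤ -1} {v : ℤ × ℤ | v.1 ≤ 0} := by
    refine ⟨fun x hx => ?_, fun x _ y _ hxy => ?_, fun y hy => ⟨(y.1 - 1, y.2), ?_, ?_⟩⟩
    · have hx' : x.1 ≤ (-1:ℤ) := hx
      show x.1 + 1 ≤ (0:ℤ)
      omega
    · simp only [Prod.mk.injEq] at hxy
      rw [Prod.ext_iff]; exact ⟨by omega, hxy.2⟩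
    · have hy' : y.1 ≤ (0:ℤ) := hy
      show y.1 - 1 ≤ (-1:ℤ)
      omega
    · rw [Prod.ext_iff]; exact ⟨by ring, rfl⟩
  calc ∑ᶠ v : ℤ × ℤ, h (s2 v)
      = ∑ᶠ v ∈ {v : ℤ × ℤ | 0 ≤ v.1} ∪ {v : ℤ × ℤ | v.1 ≤ -1}, h (s2 v) := by
        rw [hPQu, finsum_mem_univ]
    _ = (∑ᶠ v ∈ {v : ℤ × ℤ | 0 ≤ v.1}, h (s2 v))
        + ∑ᶠ v ∈ {v : ℤ × ℤ | v.1 ≤ -1}, h (s2 v) :=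
        finsum_mem_union' hPQ (hhs2.inter_of_right _) (hhs2.inter_of_right _)
    _ = (∑ᶠ v ∈ {v : ℤ × ℤ | 0 ≤ v.1}, h v) + ∑ᶠ v ∈ {v : ℤ × ℤ | v.1 ≤ 0}, h v := by
        congr 1
        · exact finsum_mem_eq_of_bijOn _ bijP (fun x hx => by
            have hx' : (0:ℤ) ≤ x.1 := hx
            simp [s2, hx'])
        · exact finsum_mem_eq_of_bijOn _ bijQ (fun x hx => by
            have hx' : x.1 ≤ (-1:ℤ) := hx
            simp [s2, show ¬ (0:ℤ) ≤ x.1 by omega])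
    _ = (∑ᶠ v, h v) + ∑ᶠ n, h (0, n) := by
        rw [add_comm]
        exact split_half h hh

/-- the `2`-graph of Subsection 6.2 satisfies the matrix condition
`{(1 - A₁^t)g + (1 - A₂^t)h : g, h ∈ ℤΛ⁰} ∩ ℕΛ⁰ = {0}`. -/
theorem stmt_14 (f : ℤ × ℤ → ℤ) (hfin : (Function.support f).Finite)
    (hpos : ∀ v, 0 ≤ f v)
    (him : ∃ g h : ℤ × ℤ → ℤ, (Function.support g).Finite ∧ (Function.support h).Finite ∧
      ∀ v, f v = (g v - ∑ᶠ w : ℤ × ℤ, (A1 w v : ℤ) * g w) +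
        (h v - ∑ᶠ w : ℤ × ℤ, (A2 w v : ℤ) * h w)) :
    f = 0 := by
  obtain ⟨g, h, hg, hh, heq⟩ := him
  have hfv : ∀ v, f v = (g v - g (s1 v)) + (h v - h (s2 v)) := by
    intro v; rw [heq v, finsum_A1, finsum_A2]
  -- the column-0 sum function
  set u : ℤ → ℤ := fun n => g (0, n) + h (0, n) with hu
  have hg0 : (support fun n : ℤ => g (0, n)).Finite := by
    apply Set.Finite.subset (hg.image Prod.snd)
    intro n hn; exact ⟨(0, n), hn, rfl⟩
  have hh0 : (support fun n : ℤ => h (0, n)).Finite := by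
    apply Set.Finite.subset (hh.image Prod.snd)
    intro n hn; exact ⟨(0, n), hn, rfl⟩
  have hus : (support u).Finite := by
    apply Set.Finite.subset (hg0.union hh0)
    intro n hn
    rw [mem_support] at hn
    by_cases hgn : g (0, n) = 0
    · right; rw [mem_support]; intro hc; apply hn; simp [hu, hgn, hc]
    · left; rwa [mem_support]
  have hcol : ∀ n : ℤ, f (0, n) = u n - u (n - 1) := by
    intro n
    rw [hfv]
    have h1 : s1 (0, n) = (0, n - 1) := by simp [s1]
    have h2 : s2 (0, n) = (0, n - 1) := by simp [s2]
    rw [h1, h2, hu]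
    ring
  have hsum0 : ∑ᶠ n, f (0, n) = 0 := by
    have h2 : (support fun n => u (n - 1)).Finite := by
      apply Set.Finite.subset (hus.image (· + 1))
      intro n hn; exact ⟨n - 1, hn, by ring⟩
    calc ∑ᶠ n, f (0, n) = ∑ᶠ n, (u n - u (n - 1)) := finsum_congr hcol
      _ = (∑ᶠ n, u n) - ∑ᶠ n, u (n - 1) := finsum_sub_distrib hus h2
      _ = 0 := by
          rw [finsum_eq_of_bijective (fun n : ℤ => n + 1)
            ⟨fun a b hab => by simpa using hab, fun b => ⟨b - 1, by ring⟩⟩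
            (fun x => by show u x = u (x + 1 - 1); congr 1; ring) (g := fun n => u (n - 1))]
          ring
  have hf0 : ∀ n : ℤ, f (0, n) = 0 := by
    intro n
    refine finsum_nonneg_zero _ ?_ (fun m => hpos (0, m)) hsum0 n
    apply Set.Finite.subset (hfin.image Prod.snd)
    intro m hm
    exact ⟨(0, m), hm, rfl⟩
  have hconst : ∀ n : ℤ, u n = u (n - 1) := by
    intro n
    have h1 := hf0 n
    rw [hcol] at h1
    exact (sub_eq_zero.mp h1)
  have hstep : ∀ (k : ℕ) (n : ℤ), u n = u (n - k) := by
    intro k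
    induction k with
    | zero => simp
    | succ k ih =>
        intro n
        rw [ih n, hconst (n - k)]
        congr 1
        push_cast
        ring
  have hu0 : ∀ n, u n = 0 := by
    obtain ⟨c, hc⟩ := hus.bddBelow
    have hcm : ∀ m : ℤ, m < c → u m = 0 := by
      intro m hm
      by_contra hne
      have := hc (by rwa [mem_support] : m ∈ support u)
      omega
    intro n
    by_cases hn : c ≤ n
    · have h1 : (n : ℤ) - ((n - (c - 1)).toNat : ℤ) = c - 1 := by omega
      rw [hstep ((n - (c - 1)).toNat) n, h1]
      exact hcm _ (by omega)
    · exact hcm n (by omega)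
  -- the total sum vanishes
  have hgs1 := supp_s1 hg
  have hhs2 := supp_s2 hh
  have hGfin : (support fun v => g v - g (s1 v)).Finite := by
    apply Set.Finite.subset (hg.union hgs1)
    intro v hv
    rw [mem_support] at hv
    by_cases h1 : g v = 0
    · right; rw [mem_support]; intro hc; apply hv; rw [h1, hc]; ring
    · left; rwa [mem_support]
  have hHfin : (support fun v => h v - h (s2 v)).Finite := by
    apply Set.Finite.subset (hh.union hhs2)
    intro v hv
    rw [mem_support] at hv
    by_cases h1 : h v = 0
    · right; rw [mem_support]; intro hc; apply hv; rw [h1, hc]; ring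
    · left; rwa [mem_support]
  have htot : ∑ᶠ v : ℤ × ℤ, f v = 0 := by
    calc ∑ᶠ v : ℤ × ℤ, f v
        = ∑ᶠ v : ℤ × ℤ, ((g v - g (s1 v)) + (h v - h (s2 v))) := finsum_congr hfv
      _ = (∑ᶠ v : ℤ × ℤ, (g v - g (s1 v))) + ∑ᶠ v : ℤ × ℤ, (h v - h (s2 v)) :=
          finsum_add_distrib hGfin hHfin
      _ = ((∑ᶠ v, g v) - ∑ᶠ v : ℤ × ℤ, g (s1 v))
          + ((∑ᶠ v, h v) - ∑ᶠ v : ℤ × ℤ, h (s2 v)) := by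
          rw [finsum_sub_distrib hg hgs1, finsum_sub_distrib hh hhs2]
      _ = -((∑ᶠ n, g (0, n)) + ∑ᶠ n, h (0, n)) := by
          rw [sum_shift1 g hg, sum_shift2 h hh]; ring
      _ = -(∑ᶠ n, u n) := by rw [← finsum_add_distrib hg0 hh0]
      _ = 0 := by
          have : ∑ᶠ n, u n = ∑ᶠ _ : ℤ, (0:ℤ) := finsum_congr hu0
          rw [this, finsum_zero, neg_zero]
  funext v
  exact finsum_nonneg_zero f hfin hpos htot v
end

section
/- Let Λ be the 2-graph of Subsection 6.2 (with vertex set {v_{m,n} : m,n ∈ ℤ}, one blue edge v_{m,n} → v_{m,n+1} for m ≤ 0 and v_{m,n} → v_{m+1,n} for m ≥ 1... as specified there). Then Λ admits no faithful graph trace: there is no function τ : Λ⁰ → (0, ∞) satisfying τ(v) = Σ_{λ ∈ vΛ^{e_i}} τ(s(λ)) for all v ∈ Λ⁰ and i = 1, 2. -/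
/-- the `2`-graph of Subsection 6.2 admits no faithful graph trace:
there is no strictly positive function `τ` on the vertices with
`τ(v) = Σ_{λ ∈ vΛ^{e_i}} τ(s(λ)) = Σ_w A_i(v,w) τ(w)` for `i = 1, 2`. -/
theorem stmt_15 :
    ¬ ∃ τ : ℤ × ℤ → ℝ, (∀ v, 0 < τ v) ∧
      (∀ v, τ v = ∑ᶠ w : ℤ × ℤ, (A1 v w : ℝ) * τ w) ∧
      (∀ v, τ v = ∑ᶠ w : ℤ × ℤ, (A2 v w : ℝ) * τ w) := by
  rintro ⟨τ, hpos, h1, h2⟩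
  -- Red relation at vertices (1, n): τ(1,n) = τ(1,n+1)
  have hred : ∀ n : ℤ, τ (1, n) = τ (1, n + 1) := by
    intro n
    have := h2 (1, n)
    rw [finsum_eq_single (fun w => (A2 (1, n) w : ℝ) * τ w) ((1 : ℤ), n + 1)] at this
    · simpa [A2] using this
    · intro w hw
      have : A2 (1, n) w = 0 := by
        simp only [A2]
        rw [if_neg]
        rintro (⟨-, rfl⟩ | ⟨h, -⟩)
        · exact hw rfl
        · omega
      simp [this]
  -- Blue relation at vertices (0, n): τ(0,n) = τ(0,n+1) + τ(1,n)
  have hblue : ∀ n : ℤ, τ (0, n) = τ (0, n + 1) + τ (1, n) := by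
    intro n
    have := h1 (0, n)
    rw [finsum_eq_finset_sum_of_support_subset (fun w => (A1 (0, n) w : ℝ) * τ w)
        (s := {((0 : ℤ), n + 1), ((1 : ℤ), n)})] at this
    · rw [Finset.sum_pair (by simp)] at this
      simpa [A1] using this
    · intro w hw
      simp only [Function.mem_support, ne_eq] at hw
      have : A1 (0, n) w ≠ 0 := by
        intro h; apply hw; simp [h]
      simp only [A1, ite_ne_right_iff] at this
      rcases this.1 with ⟨-, rfl⟩ | ⟨-, rfl⟩ <;> simp
  -- τ(1, n) = τ(1, 0) for natural n
  have hconst : ∀ n : ℕ, τ (1, (n : ℤ)) = τ (1, 0) := by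
    intro n
    induction n with
    | zero => rfl
    | succ k ih => rw [← ih]; push_cast; exact (hred k).symm
  -- τ(0,0) = τ(0,n) + n * τ(1,0)
  have hmain : ∀ n : ℕ, τ (0, 0) = τ (0, (n : ℤ)) + n * τ (1, 0) := by
    intro n
    induction n with
    | zero => simp
    | succ k ih =>
      rw [ih, hblue k, hconst k]
      push_cast
      ring_nf
  obtain ⟨n, hn⟩ := exists_nat_gt (τ (0, 0) / τ (1, 0))
  have h10 := hpos (1, 0)
  have h0n := hpos (0, (n : ℤ))
  have := hmain n
  rw [div_lt_iff₀ h10] at hn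
  nlinarith
end

section
/- Let G be an abelian group with endomorphism φ, and suppose given a commuting diagram of abelian groups with exact rows: 0 → H¹ → lim→(G¹,φ¹) →^{1−φ¹∞} lim→(G¹,φ¹) → K¹ → 0 over 0 → H² → lim→(G²,φ²) →^{1−φ²∞} lim→(G²,φ²) → K² → 0, where the middle vertical maps are both ψ∞ (induced by a homomorphism ψ : G¹ → G² with ψ∘φ¹ = φ²∘ψ) and the outer vertical maps are η : H¹ → H² and θ : K¹ → K². Then there exist homomorphisms ζ^i : H^i → G^i and τ^i : G^i → K^i making the diagram 0 → H¹ →^{ζ¹} G¹ →^{1−φ¹} G¹ →^{τ¹} K¹ → 0 over 0 → H² →^{ζ²} G² →^{1−φ²} G² →^{τ²} K² → 0 (with vertical maps η, ψ, ψ, θ) commute with exact rows. -/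
private theorem tele {G : Type*} [AddCommGroup G] (φ : G →+ G) (g : G) (m : ℕ) :
    ∃ s, s - φ s = g - (⇑φ)^[m] g := by
  induction m with
  | zero => exact ⟨0, by simp⟩
  | succ m ih =>
    obtain ⟨s, hs⟩ := ih
    refine ⟨s + (⇑φ)^[m] g, ?_⟩
    have h1 : (⇑φ)^[m+1] g = φ ((⇑φ)^[m] g) := Function.iterate_succ_apply' _ _ _
    rw [map_add, h1]
    calc s + (⇑φ)^[m] g - (φ s + φ ((⇑φ)^[m] g))
        = (s - φ s) + ((⇑φ)^[m] g - φ ((⇑φ)^[m] g)) := by abel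
      _ = g - φ ((⇑φ)^[m] g) := by rw [hs]; abel

private theorem jshift {G L : Type*} [AddCommGroup G] [AddCommGroup L]
    (φ : G →+ G) (j : ℕ → G →+ L) (hj : ∀ n g, j n g = j (n+1) (φ g))
    (n k : ℕ) (g : G) : j n g = j (n+k) ((⇑φ)^[k] g) := by
  induction k with
  | zero => simp
  | succ k ih =>
    rw [ih, hj, Function.iterate_succ_apply' φ k g]
    rfl

private theorem auxζ {G L H : Type*} [AddCommGroup G] [AddCommGroup L] [AddCommGroup H]
    (φ : G →+ G) (j : ℕ → G →+ L)
    (hj : ∀ n g, j n g = j (n+1) (φ g))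
    (hsurj : ∀ x : L, ∃ n g, j n g = x)
    (hker : ∀ n g, j n g = 0 → ∃ k, (⇑φ)^[k] g = 0)
    (φinf : L →+ L) (hφinf : ∀ n g, φinf (j n g) = j n (φ g))
    (ι : H →+ L) (hιinj : Function.Injective ι)
    (hexactl : ∀ x : L, (∃ h, ι h = x) ↔ x = φinf x) :
    ∃ ζ : H →+ G, Function.Injective ζ ∧
      (∀ h, φ (ζ h) = ζ h) ∧ (∀ h, j 0 (ζ h) = ι h) ∧
      (∀ g : G, (∃ h, ζ h = g) ↔ φ g = g) ∧
      (∀ g g' : G, φ g = g → φ g' = g' → j 0 g = j 0 g' → g = g') := by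
  have jconst : ∀ (m : ℕ) (g : G), φ g = g → j 0 g = j m g := by
    intro m g hg
    have h := jshift φ j hj 0 m g
    rwa [Function.iterate_fixed hg m, zero_add] at h
  have inj0 : ∀ g g' : G, φ g = g → φ g' = g' → j 0 g = j 0 g' → g = g' := by
    intro g g' hg hg' hjj
    have h0 : j 0 (g - g') = 0 := by rw [map_sub, hjj, sub_self]
    obtain ⟨k, hk⟩ := hker 0 _ h0
    have hfix : φ (g - g') = g - g' := by rw [map_sub, hg, hg']
    rw [Function.iterate_fixed hfix k] at hk
    exact sub_eq_zero.mp hk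
  have exz : ∀ h : H, ∃ g, φ g = g ∧ j 0 g = ι h := by
    intro h
    have hfix : ι h = φinf (ι h) := (hexactl (ι h)).mp ⟨h, rfl⟩
    obtain ⟨n, g, hng⟩ := hsurj (ι h)
    have h1 : j n g = j n (φ g) := by
      rw [← hφinf, hng]
      exact hfix
    have h2 : j n (g - φ g) = 0 := by rw [map_sub, ← h1, sub_self]
    obtain ⟨k, hk⟩ := hker n _ h2
    have hsub : (⇑φ)^[k] g - (⇑φ)^[k] (φ g) = 0 := by
      rw [← iterate_map_sub φ]; exact hk
    have hfix' : φ ((⇑φ)^[k] g) = (⇑φ)^[k] g := by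
      have h3 : (⇑φ)^[k] (φ g) = φ ((⇑φ)^[k] g) := by
        rw [← Function.iterate_succ_apply, Function.iterate_succ_apply']
      rw [← h3]
      exact (sub_eq_zero.mp hsub).symm
    refine ⟨(⇑φ)^[k] g, hfix', ?_⟩
    rw [jconst (n + k) _ hfix', ← jshift φ j hj n k g, hng]
  classical
  set z : H → G := fun h => Classical.choose (exz h) with hz
  have hz1 : ∀ h, φ (z h) = z h := fun h => (Classical.choose_spec (exz h)).1
  have hz2 : ∀ h, j 0 (z h) = ι h := fun h => (Classical.choose_spec (exz h)).2
  have hadd : ∀ a b, z (a + b) = z a + z b := by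
    intro a b
    refine inj0 _ _ (hz1 _) ?_ ?_
    · rw [map_add, hz1, hz1]
    · rw [hz2, map_add, map_add, hz2, hz2]
  refine ⟨AddMonoidHom.mk' z hadd, ?_, hz1, hz2, ?_, inj0⟩
  · intro a b hab
    apply hιinj
    rw [← hz2 a, ← hz2 b]
    exact congrArg _ hab
  · intro g
    constructor
    · rintro ⟨h, rfl⟩; exact hz1 h
    · intro hg
      have hfx : j 0 g = φinf (j 0 g) := by rw [hφinf, hg]
      obtain ⟨h, hh⟩ := (hexactl (j 0 g)).mpr hfx
      refine ⟨h, inj0 (z h) g (hz1 h) hg ?_⟩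
      rw [hz2, hh]

private theorem auxτ {G L K : Type*} [AddCommGroup G] [AddCommGroup L] [AddCommGroup K]
    (φ : G →+ G) (j : ℕ → G →+ L)
    (hj : ∀ n g, j n g = j (n+1) (φ g))
    (hsurj : ∀ x : L, ∃ n g, j n g = x)
    (hker : ∀ n g, j n g = 0 → ∃ k, (⇑φ)^[k] g = 0)
    (φinf : L →+ L) (hφinf : ∀ n g, φinf (j n g) = j n (φ g))
    (π : L →+ K)
    (hexactr : ∀ x : L, (∃ y, y - φinf y = x) ↔ π x = 0)
    (hπsurj : Function.Surjective π) :
    (∀ g : G, (∃ g', g' - φ g' = g) ↔ π (j 0 g) = 0) ∧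
    Function.Surjective (fun g => π (j 0 g)) := by
  have hπφ : ∀ x : L, π (φinf x) = π x := by
    intro x
    have h0 : π (x - φinf x) = 0 := (hexactr _).mp ⟨x, rfl⟩
    rw [map_sub, sub_eq_zero] at h0
    exact h0.symm
  have hπiter : ∀ (n : ℕ) (m : ℕ) (g : G), π (j n ((⇑φ)^[m] g)) = π (j n g) := by
    intro n m g
    induction m with
    | zero => rfl
    | succ m ih =>
      rw [Function.iterate_succ_apply' φ m g, ← hφinf, hπφ, ih]
  constructor
  · intro g
    constructor
    · rintro ⟨g', rfl⟩
      have h1 : j 0 (g' - φ g') = j 0 g' - φinf (j 0 g') := by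
        rw [map_sub, hφinf]
      rw [h1]
      exact (hexactr _).mp ⟨j 0 g', rfl⟩
    · intro hg
      obtain ⟨y, hy⟩ := (hexactr _).mpr hg
      obtain ⟨n, a, hna⟩ := hsurj y
      have h1 : j n (a - φ a - (⇑φ)^[n] g) = 0 := by
        rw [map_sub, map_sub, ← hφinf, hna, hy, jshift φ j hj 0 n g, zero_add, sub_self]
      obtain ⟨k, hk⟩ := hker n _ h1
      have h2 : (⇑φ)^[k] a - (⇑φ)^[k] (φ a) - (⇑φ)^[k] ((⇑φ)^[n] g) = 0 := by
        rw [← iterate_map_sub φ, ← iterate_map_sub φ]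
        exact hk
      have h3 : (⇑φ)^[k] (φ a) = φ ((⇑φ)^[k] a) := by
        rw [← Function.iterate_succ_apply, Function.iterate_succ_apply']
      have h4 : (⇑φ)^[k] ((⇑φ)^[n] g) = (⇑φ)^[k + n] g := by
        rw [← Function.iterate_add_apply]
      rw [h3, h4] at h2
      obtain ⟨s, hs⟩ := tele φ g (k + n)
      refine ⟨s + (⇑φ)^[k] a, ?_⟩
      rw [map_add]
      have h5 : (⇑φ)^[k] a - φ ((⇑φ)^[k] a) = (⇑φ)^[k + n] g := by
        exact sub_eq_zero.mp h2
      calc s + (⇑φ)^[k] a - (φ s + φ ((⇑φ)^[k] a))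
          = (s - φ s) + ((⇑φ)^[k] a - φ ((⇑φ)^[k] a)) := by abel
        _ = (g - (⇑φ)^[k + n] g) + (⇑φ)^[k + n] g := by rw [hs, h5]
        _ = g := by abel
  · intro c
    obtain ⟨x, hx⟩ := hπsurj c
    obtain ⟨n, g, hng⟩ := hsurj x
    refine ⟨g, ?_⟩
    simp only
    rw [jshift φ j hj 0 n g, zero_add, hπiter, hng, hx]


/-- given a commuting diagram with exact rows
`0 → Hⁱ →ιⁱ lim→(Gⁱ,φⁱ) →(1-φⁱ∞) lim→(Gⁱ,φⁱ) →πⁱ Kⁱ → 0` (i = 1,2), with middle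
vertical maps `ψ∞` induced by `ψ : G¹ → G²` satisfying `ψ ∘ φ¹ = φ² ∘ ψ`, and outer
vertical maps `η, θ`, there exist homomorphisms `ζⁱ : Hⁱ → Gⁱ` and `τⁱ : Gⁱ → Kⁱ` such
that the rows `0 → Hⁱ →ζⁱ Gⁱ →(1-φⁱ) Gⁱ →τⁱ Kⁱ → 0` are exact and the resulting
diagram (with vertical maps `η, ψ, ψ, θ`) commutes. -/
theorem stmt_16 {G₁ G₂ L₁ L₂ H₁ H₂ K₁ K₂ : Type*}
    [AddCommGroup G₁] [AddCommGroup G₂] [AddCommGroup L₁] [AddCommGroup L₂]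
    [AddCommGroup H₁] [AddCommGroup H₂] [AddCommGroup K₁] [AddCommGroup K₂]
    (φ₁ : G₁ →+ G₁) (φ₂ : G₂ →+ G₂)
    (j₁ : ℕ → G₁ →+ L₁) (j₂ : ℕ → G₂ →+ L₂)
    (hj₁ : ∀ n, j₁ n = (j₁ (n + 1)).comp φ₁)
    (hj₂ : ∀ n, j₂ n = (j₂ (n + 1)).comp φ₂)
    (hsurj₁ : ∀ x : L₁, ∃ n g, j₁ n g = x)
    (hsurj₂ : ∀ x : L₂, ∃ n g, j₂ n g = x)
    (hker₁ : ∀ n g, j₁ n g = 0 → ∃ k, (⇑φ₁)^[k] g = 0)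
    (hker₂ : ∀ n g, j₂ n g = 0 → ∃ k, (⇑φ₂)^[k] g = 0)
    (φ₁inf : L₁ →+ L₁) (φ₂inf : L₂ →+ L₂)
    (hφ₁inf : ∀ n, φ₁inf.comp (j₁ n) = (j₁ n).comp φ₁)
    (hφ₂inf : ∀ n, φ₂inf.comp (j₂ n) = (j₂ n).comp φ₂)
    (ψ : G₁ →+ G₂) (hψ : ψ.comp φ₁ = φ₂.comp ψ)
    (ψinf : L₁ →+ L₂) (hψinf : ∀ n, ψinf.comp (j₁ n) = (j₂ n).comp ψ)
    (ι₁ : H₁ →+ L₁) (ι₂ : H₂ →+ L₂) (π₁ : L₁ →+ K₁) (π₂ : L₂ →+ K₂)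
    (η : H₁ →+ H₂) (θ : K₁ →+ K₂)
    (hι₁inj : Function.Injective ι₁) (hι₂inj : Function.Injective ι₂)
    (hexact₁l : ∀ x : L₁, (∃ h, ι₁ h = x) ↔ (AddMonoidHom.id L₁ - φ₁inf) x = 0)
    (hexact₂l : ∀ x : L₂, (∃ h, ι₂ h = x) ↔ (AddMonoidHom.id L₂ - φ₂inf) x = 0)
    (hexact₁r : ∀ x : L₁, (∃ y, (AddMonoidHom.id L₁ - φ₁inf) y = x) ↔ π₁ x = 0)
    (hexact₂r : ∀ x : L₂, (∃ y, (AddMonoidHom.id L₂ - φ₂inf) y = x) ↔ π₂ x = 0)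
    (hπ₁surj : Function.Surjective π₁) (hπ₂surj : Function.Surjective π₂)
    (hcommι : ψinf.comp ι₁ = ι₂.comp η)
    (hcommπ : θ.comp π₁ = π₂.comp ψinf) :
    ∃ (ζ₁ : H₁ →+ G₁) (ζ₂ : H₂ →+ G₂) (τ₁ : G₁ →+ K₁) (τ₂ : G₂ →+ K₂),
      Function.Injective ζ₁ ∧ Function.Injective ζ₂ ∧
      (∀ g : G₁, (∃ h, ζ₁ h = g) ↔ (AddMonoidHom.id G₁ - φ₁) g = 0) ∧
      (∀ g : G₂, (∃ h, ζ₂ h = g) ↔ (AddMonoidHom.id G₂ - φ₂) g = 0) ∧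
      (∀ g : G₁, (∃ g', (AddMonoidHom.id G₁ - φ₁) g' = g) ↔ τ₁ g = 0) ∧
      (∀ g : G₂, (∃ g', (AddMonoidHom.id G₂ - φ₂) g' = g) ↔ τ₂ g = 0) ∧
      Function.Surjective τ₁ ∧ Function.Surjective τ₂ ∧
      (∀ h : H₁, ψ (ζ₁ h) = ζ₂ (η h)) ∧
      (∀ g : G₁, θ (τ₁ g) = τ₂ (ψ g)) := by
  
  have hj₁' : ∀ n g, j₁ n g = j₁ (n+1) (φ₁ g) := fun n g => DFunLike.congr_fun (hj₁ n) g
  have hj₂' : ∀ n g, j₂ n g = j₂ (n+1) (φ₂ g) := fun n g => DFunLike.congr_fun (hj₂ n) g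
  have hφ₁inf' : ∀ n g, φ₁inf (j₁ n g) = j₁ n (φ₁ g) := fun n g => DFunLike.congr_fun (hφ₁inf n) g
  have hφ₂inf' : ∀ n g, φ₂inf (j₂ n g) = j₂ n (φ₂ g) := fun n g => DFunLike.congr_fun (hφ₂inf n) g
  have hψ' : ∀ x, ψ (φ₁ x) = φ₂ (ψ x) := fun x => DFunLike.congr_fun hψ x
  have hψinf' : ∀ n x, ψinf (j₁ n x) = j₂ n (ψ x) := fun n x => DFunLike.congr_fun (hψinf n) x
  have hcι : ∀ h, ψinf (ι₁ h) = ι₂ (η h) := fun h => DFunLike.congr_fun hcommι h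
  have hcπ : ∀ x, θ (π₁ x) = π₂ (ψinf x) := fun x => DFunLike.congr_fun hcommπ x
  have hexact₁l' : ∀ x : L₁, (∃ h, ι₁ h = x) ↔ x = φ₁inf x := by
    intro x
    rw [hexact₁l x]
    simp only [AddMonoidHom.sub_apply, AddMonoidHom.id_apply, sub_eq_zero]
  have hexact₂l' : ∀ x : L₂, (∃ h, ι₂ h = x) ↔ x = φ₂inf x := by
    intro x
    rw [hexact₂l x]
    simp only [AddMonoidHom.sub_apply, AddMonoidHom.id_apply, sub_eq_zero]
  have hexact₁r' : ∀ x : L₁, (∃ y, y - φ₁inf y = x) ↔ π₁ x = 0 := by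
    intro x
    rw [← hexact₁r x]
    simp only [AddMonoidHom.sub_apply, AddMonoidHom.id_apply]
  have hexact₂r' : ∀ x : L₂, (∃ y, y - φ₂inf y = x) ↔ π₂ x = 0 := by
    intro x
    rw [← hexact₂r x]
    simp only [AddMonoidHom.sub_apply, AddMonoidHom.id_apply]
  obtain ⟨ζ₁, hζ₁inj, hζ₁fix, hζ₁j, hζ₁ex, inj₁⟩ :=
    auxζ φ₁ j₁ hj₁' hsurj₁ hker₁ φ₁inf hφ₁inf' ι₁ hι₁inj hexact₁l'
  obtain ⟨ζ₂, hζ₂inj, hζ₂fix, hζ₂j, hζ₂ex, inj₂⟩ :=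
    auxζ φ₂ j₂ hj₂' hsurj₂ hker₂ φ₂inf hφ₂inf' ι₂ hι₂inj hexact₂l'
  obtain ⟨hτ₁ex, hτ₁surj⟩ :=
    auxτ φ₁ j₁ hj₁' hsurj₁ hker₁ φ₁inf hφ₁inf' π₁ hexact₁r' hπ₁surj
  obtain ⟨hτ₂ex, hτ₂surj⟩ :=
    auxτ φ₂ j₂ hj₂' hsurj₂ hker₂ φ₂inf hφ₂inf' π₂ hexact₂r' hπ₂surj
  refine ⟨ζ₁, ζ₂, π₁.comp (j₁ 0), π₂.comp (j₂ 0), hζ₁inj, hζ₂inj, ?_, ?_, ?_, ?_, ?_, ?_, ?_, ?_⟩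
  · intro g
    simp only [AddMonoidHom.sub_apply, AddMonoidHom.id_apply, sub_eq_zero]
    rw [hζ₁ex g]
    exact eq_comm
  · intro g
    simp only [AddMonoidHom.sub_apply, AddMonoidHom.id_apply, sub_eq_zero]
    rw [hζ₂ex g]
    exact eq_comm
  · intro g
    simp only [AddMonoidHom.sub_apply, AddMonoidHom.id_apply, AddMonoidHom.coe_comp,
      Function.comp_apply]
    exact hτ₁ex g
  · intro g
    simp only [AddMonoidHom.sub_apply, AddMonoidHom.id_apply, AddMonoidHom.coe_comp,
      Function.comp_apply]
    exact hτ₂ex g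
  · exact hτ₁surj
  · exact hτ₂surj
  · intro h
    refine inj₂ _ _ ?_ (hζ₂fix _) ?_
    · rw [← hψ', hζ₁fix]
    · rw [hζ₂j, ← hψinf' 0 (ζ₁ h), hζ₁j, hcι]
  · intro g
    simp only [AddMonoidHom.coe_comp, Function.comp_apply]
    rw [hcπ, hψinf' 0 g]
end
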